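/- arXiv:0910.0292 — 2 statements merged into one kernel-verified Lean document; each statement's English description precedes it below -/
import Mathlib

section
/- Let E be the 'infinite clock' graph: E⁰ = {v, w₁, w₂, …}, E¹ = {e₁, e₂, …} with s(e_i) = v and r(e_i) = w_i for all i ≥ 1, and let K be a field. Then the two-sided ideal of the Leavitt path algebra L_K(E) generated by v − e₁e₁* is not generated by any set of elements of the form u + Σ_{k=1}^m λ_k gᵏ with u ∈ E⁰, g a cycle based at u (possibly trivial), and λ_k ∈ K. -/
/-- A directed graph with vertex type `V` and edge type `Ed`. -/
structure DirGraph (V Ed : Type) where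
  src : Ed → V
  rng : Ed → V

variable {V Ed : Type}

/-- Generators of the Leavitt path algebra: vertices, real edges, ghost edges. -/
abbrev LGen (V Ed : Type) : Type := V ⊕ Ed ⊕ Ed

variable (K : Type) [Field K]

/-- The vertex generator inside the free algebra. -/
def fvtx (v : V) : FreeAlgebra K (LGen V Ed) := FreeAlgebra.ι K (Sum.inl v)
/-- The real-edge generator inside the free algebra. -/
def fre (e : Ed) : FreeAlgebra K (LGen V Ed) := FreeAlgebra.ι K (Sum.inr (Sum.inl e))
/-- The ghost-edge generator inside the free algebra. -/
def fge (e : Ed) : FreeAlgebra K (LGen V Ed) := FreeAlgebra.ι K (Sum.inr (Sum.inr e))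

variable (G : DirGraph V Ed)

open scoped Classical in
/-- The defining relations of the Leavitt path algebra. -/
inductive LeavittRel : FreeAlgebra K (LGen V Ed) → FreeAlgebra K (LGen V Ed) → Prop
  | vv (v w : V) : LeavittRel (fvtx K v * fvtx K w) (if v = w then fvtx K v else 0)
  | se (e : Ed) : LeavittRel (fvtx K (G.src e) * fre K e) (fre K e)
  | er (e : Ed) : LeavittRel (fre K e * fvtx K (G.rng e)) (fre K e)
  | rg (e : Ed) : LeavittRel (fvtx K (G.rng e) * fge K e) (fge K e)
  | gs (e : Ed) : LeavittRel (fge K e * fvtx K (G.src e)) (fge K e)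
  | gf (e f : Ed) : LeavittRel (fge K e * fre K f) (if e = f then fvtx K (G.rng e) else 0)
  | ck (v : V) (hfin : {e : Ed | G.src e = v}.Finite) (hne : {e : Ed | G.src e = v}.Nonempty) :
      LeavittRel (fvtx K v) (∑ e ∈ hfin.toFinset, fre K e * fge K e)

/-- The Leavitt path algebra `L_K(E)`. -/
abbrev LPA : Type := RingQuot (LeavittRel K G)

/-- The image of a vertex in the Leavitt path algebra. -/
def vtx (v : V) : LPA K G := RingQuot.mkAlgHom K (LeavittRel K G) (fvtx K v)
/-- The image of a real edge in the Leavitt path algebra. -/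
def re (e : Ed) : LPA K G := RingQuot.mkAlgHom K (LeavittRel K G) (fre K e)
/-- The image of a ghost edge in the Leavitt path algebra. -/
def ge (e : Ed) : LPA K G := RingQuot.mkAlgHom K (LeavittRel K G) (fge K e)

/-- The element `e₁ ⋯ e_n` of the Leavitt path algebra given by a list of edges. -/
def pathProd (l : List Ed) : LPA K G := (l.map (re K G)).prod

/-- The element `μ* = e_n* ⋯ e₁*` of the Leavitt path algebra given by a list of edges. -/
def ghostStar (l : List Ed) : LPA K G := (l.reverse.map (ge K G)).prod

/-- `l` is a path from `u` to `v`: a nonempty compatible list of edges with source `u` and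
range `v`. -/
structure IsPathFromTo (G : DirGraph V Ed) (l : List Ed) (u v : V) : Prop where
  ne : l ≠ []
  chain : l.Chain' fun e f => G.rng e = G.src f
  src_eq : G.src (l.head ne) = u
  rng_eq : G.rng (l.getLast ne) = v

/-- A closed path based at `v`. -/
def IsClosedPathAt (G : DirGraph V Ed) (l : List Ed) (v : V) : Prop := IsPathFromTo G l v v

/-- A closed simple path based at `v`. -/
def IsCSPAt (G : DirGraph V Ed) (l : List Ed) (v : V) : Prop :=
  IsPathFromTo G l v v ∧ ∀ e ∈ l.tail, G.src e ≠ v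

/-- A (nontrivial) cycle based at `v`: a closed path whose sources are pairwise distinct. -/
def IsCycleListAt (G : DirGraph V Ed) (l : List Ed) (v : V) : Prop :=
  IsPathFromTo G l v v ∧ (l.map G.src).Nodup

/-- The preorder on vertices: `u ≥ v` iff `u = v` or there is a path from `u` to `v`. -/
def Reaches (G : DirGraph V Ed) (u v : V) : Prop := u = v ∨ ∃ l, IsPathFromTo G l u v

/-- `c` is (the element of `L_K(E)` given by) a possibly trivial cycle based at `v`. -/
def IsCycleElemAt (v : V) (c : LPA K G) : Prop :=
  c = vtx K G v ∨ ∃ l, IsCycleListAt G l v ∧ c = pathProd K G l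

/-- `x` has the form `v + ∑_{k=1}^m λ_k g^k` for a (possibly trivial) cycle `g` based at `v`. -/
def IsCycleGenElt (x : LPA K G) : Prop :=
  ∃ (v : V) (c : LPA K G), IsCycleElemAt K G v c ∧ ∃ (m : ℕ) (lam : ℕ → K),
    x = vtx K G v + ∑ k ∈ Finset.range m, lam (k + 1) • c ^ (k + 1)

/-- A hereditary subset of vertices. -/
def Hereditary (G : DirGraph V Ed) (H : Set V) : Prop :=
  ∀ u ∈ H, ∀ v, Reaches G u v → v ∈ H

/-- A saturated subset of vertices. -/
def Saturated (G : DirGraph V Ed) (H : Set V) : Prop :=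
  ∀ v : V, ({e : Ed | G.src e = v}).Finite → ({e : Ed | G.src e = v}).Nonempty →
    (∀ e : Ed, G.src e = v → G.rng e ∈ H) → v ∈ H

/-- The hereditary saturated closure of a set of vertices. -/
def HSClosure (G : DirGraph V Ed) (X : Set V) : Set V :=
  ⋂₀ {H : Set V | X ⊆ H ∧ Hereditary G H ∧ Saturated G H}


/-- The "infinite clock" graph: one vertex `v = none` emitting, for every `i : ℕ`,
an edge `eᵢ = i` with range `wᵢ = some i`. -/
def clockGraph : DirGraph (Option ℕ) ℕ where
  src _ := none
  rng i := some i

/-! The infinite clock has no cycles, so every element `u + ∑ λ_k g^k` is a scalar multiple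
`c • u` of a vertex, and no vertex is a finite emitter, so representations of `L_K(E)` are just
families satisfying the relations (1)–(4). Two of them separate the ideals: the character
`ψ : L_K(E) → K` with `ψ v = 1` and all other generators `0`, and the matrix-unit representation
`φ : L_K(E) → M₂(K)` of the subgraph `v → w₁`, which kills `v - e₁e₁*`. If a set `S` of such
elements generated the ideal of `v - e₁e₁*`, then `S ⊆ ker φ` forces `c = 0` whenever `u = v`,
so `S ⊆ ker ψ`; but `ψ (v - e₁e₁*) = 1`.
(Edges are indexed from `0`: `e₁` is `0` and `w₁` is `some 0`.) -/

structure LeavittFamily (A : Type*) [Semiring A] [Algebra K A] where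
  vertex : V → A
  edge : Ed → A
  ghost : Ed → A
  vertex_mul_self : ∀ v, vertex v * vertex v = vertex v
  vertex_mul_vertex_of_ne : ∀ v w, v ≠ w → vertex v * vertex w = 0
  src_mul_edge : ∀ e, vertex (G.src e) * edge e = edge e
  edge_mul_rng : ∀ e, edge e * vertex (G.rng e) = edge e
  rng_mul_ghost : ∀ e, vertex (G.rng e) * ghost e = ghost e
  ghost_mul_src : ∀ e, ghost e * vertex (G.src e) = ghost e
  ghost_mul_edge_self : ∀ e, ghost e * edge e = vertex (G.rng e)
  ghost_mul_edge_of_ne : ∀ e f, e ≠ f → ghost e * edge f = 0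
  vertex_eq_sum : ∀ v (hfin : {e | G.src e = v}.Finite), {e | G.src e = v}.Nonempty →
    vertex v = ∑ e ∈ hfin.toFinset, edge e * ghost e

namespace LeavittFamily

variable {K G} {A : Type*} [Semiring A] [Algebra K A] (F : LeavittFamily K G A)

def gen : LGen V Ed → A := Sum.elim F.vertex (Sum.elim F.edge F.ghost)

theorem freeLift_respects_leavittRel ⦃a b : FreeAlgebra K (LGen V Ed)⦄
    (h : LeavittRel K G a b) : FreeAlgebra.lift K F.gen a = FreeAlgebra.lift K F.gen b := by
  cases h with
  | vv v w =>
    split_ifs with hvw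
    · subst hvw; simpa [fvtx, gen] using F.vertex_mul_self v
    · simpa [fvtx, gen] using F.vertex_mul_vertex_of_ne v w hvw
  | se e => simpa [fvtx, fre, gen] using F.src_mul_edge e
  | er e => simpa [fvtx, fre, gen] using F.edge_mul_rng e
  | rg e => simpa [fvtx, fge, gen] using F.rng_mul_ghost e
  | gs e => simpa [fvtx, fge, gen] using F.ghost_mul_src e
  | gf e f =>
    split_ifs with hef
    · subst hef; simpa [fvtx, fre, fge, gen] using F.ghost_mul_edge_self e
    · simpa [fre, fge, gen] using F.ghost_mul_edge_of_ne e f hef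
  | ck v hfin hne => simpa [fvtx, fre, fge, gen] using F.vertex_eq_sum v hfin hne

def lift : LPA K G →ₐ[K] A :=
  RingQuot.liftAlgHom K ⟨FreeAlgebra.lift K F.gen, F.freeLift_respects_leavittRel⟩

@[simp]
theorem lift_vtx (v : V) : F.lift (vtx K G v) = F.vertex v := by
  simp [lift, vtx, fvtx, gen]

@[simp]
theorem lift_re (e : Ed) : F.lift (re K G e) = F.edge e := by
  simp [lift, re, fre, gen]

@[simp]
theorem lift_ge (e : Ed) : F.lift (ge K G e) = F.ghost e := by
  simp [lift, ge, fge, gen]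

end LeavittFamily

theorem isIdempotentElem_vtx (v : V) : IsIdempotentElem (vtx K G v) := by
  simpa [IsIdempotentElem, vtx] using RingQuot.mkAlgHom_rel K (LeavittRel.vv (K := K) (G := G) v v)

variable {K G} in
theorem IsCycleGenElt.exists_eq_smul_vtx (hG : ∀ l v, ¬ IsCycleListAt G l v)
    {x : LPA K G} (hx : IsCycleGenElt K G x) : ∃ (u : V) (c : K), x = c • vtx K G u := by
  obtain ⟨u, g, hg | ⟨l, hl, -⟩, m, lam, rfl⟩ := hx
  · refine ⟨u, 1 + ∑ k ∈ Finset.range m, lam (k + 1), ?_⟩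
    simp only [hg, (isIdempotentElem_vtx K G u).pow_succ_eq, add_smul, one_smul, Finset.sum_smul]
  · exact (hG l u hl).elim

theorem TwoSidedIdeal.span_singleton_le_ker_iff {R S F : Type*} [Ring R] [Semiring S]
    [FunLike F R S] [RingHomClass F R S] (f : F) (a : R) :
    TwoSidedIdeal.span {a} ≤ TwoSidedIdeal.ker f ↔ f a = 0 := by
  rw [TwoSidedIdeal.span_le, Set.singleton_subset_iff, SetLike.mem_coe, TwoSidedIdeal.mem_ker]

theorem clockGraph_not_isCycleListAt (l : List ℕ) (v : Option ℕ) :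
    ¬ IsCycleListAt clockGraph l v := by
  rintro ⟨⟨hne, -, hsrc, hrng⟩, -⟩
  exact Option.some_ne_none _ (hrng.trans hsrc.symm)

theorem clockGraph_setOf_src_infinite {v : Option ℕ} (hne : {e | clockGraph.src e = v}.Nonempty) :
    {e | clockGraph.src e = v}.Infinite := by
  obtain ⟨e, rfl⟩ := hne
  simpa [clockGraph] using Set.infinite_univ

def clockScalarFamily : LeavittFamily K clockGraph K where
  vertex := fun | none => 1 | some _ => 0
  edge _ := 0
  ghost _ := 0
  vertex_mul_self := by rintro (_ | _) <;> simp
  vertex_mul_vertex_of_ne := by rintro (_ | _) (_ | _) h <;> simp_all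
  src_mul_edge _ := mul_zero _
  edge_mul_rng _ := zero_mul _
  rng_mul_ghost _ := mul_zero _
  ghost_mul_src _ := zero_mul _
  ghost_mul_edge_self _ := by simp [clockGraph]
  ghost_mul_edge_of_ne _ _ _ := mul_zero _
  vertex_eq_sum _ hfin hne := (clockGraph_setOf_src_infinite hne hfin).elim

open Matrix in
def clockMatrixFamily : LeavittFamily K clockGraph (Matrix (Fin 2) (Fin 2) K) where
  vertex := fun | none => single 0 0 1 | some 0 => single 1 1 1 | some (_ + 1) => 0
  edge := fun | 0 => single 0 1 1 | _ + 1 => 0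
  ghost := fun | 0 => single 1 0 1 | _ + 1 => 0
  vertex_mul_self := by rintro (_ | _ | _) <;> simp
  vertex_mul_vertex_of_ne := by rintro (_ | _ | _) (_ | _ | _) h <;> simp_all
  src_mul_edge := by rintro (_ | _) <;> simp [clockGraph]
  edge_mul_rng := by rintro (_ | _) <;> simp [clockGraph]
  rng_mul_ghost := by rintro (_ | _) <;> simp [clockGraph]
  ghost_mul_src := by rintro (_ | _) <;> simp [clockGraph]
  ghost_mul_edge_self := by rintro (_ | _) <;> simp [clockGraph]
  ghost_mul_edge_of_ne := by rintro (_ | _) (_ | _) h <;> simp_all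
  vertex_eq_sum _ hfin hne := (clockGraph_setOf_src_infinite hne hfin).elim

theorem clockScalarFamily_lift_generator :
    (clockScalarFamily K).lift
      (vtx K clockGraph none - re K clockGraph 0 * ge K clockGraph 0) = 1 := by
  simp [clockScalarFamily]

theorem clockMatrixFamily_lift_generator :
    (clockMatrixFamily K).lift
      (vtx K clockGraph none - re K clockGraph 0 * ge K clockGraph 0) = 0 := by
  simp [clockMatrixFamily]

theorem clockScalarFamily_lift_smul_vtx_eq_zero {u : Option ℕ} {c : K}
    (h : (clockMatrixFamily K).lift (c • vtx K clockGraph u) = 0) :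
    (clockScalarFamily K).lift (c • vtx K clockGraph u) = 0 := by
  rcases u with _ | i
  · have hc : c = 0 := by simpa [clockMatrixFamily] using congrFun (congrFun h 0) 0
    simp [hc]
  · simp [clockScalarFamily]

/-- in the infinite clock, the two-sided ideal generated by `v - e₁e₁*` is not
generated by any set of elements of the form `u + ∑ λ_k g^k` with `g` a (possibly trivial)
cycle based at `u`. -/
theorem clock_ideal_not_cycle_generated :
    ¬ ∃ S : Set (LPA K clockGraph),
        (∀ x ∈ S, IsCycleGenElt K clockGraph x) ∧
        TwoSidedIdeal.span S =
          TwoSidedIdeal.span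
            {vtx K clockGraph (none : Option ℕ) - re K clockGraph 0 * ge K clockGraph 0} := by
  rintro ⟨S, hS, hspan⟩
  have hS_matrix : S ⊆ TwoSidedIdeal.ker (clockMatrixFamily K).lift :=
    TwoSidedIdeal.span_le.1 <| hspan ▸
      (TwoSidedIdeal.span_singleton_le_ker_iff _ _).2 (clockMatrixFamily_lift_generator K)
  have hS_scalar : S ⊆ TwoSidedIdeal.ker (clockScalarFamily K).lift := by
    intro x hx
    obtain ⟨u, c, rfl⟩ := (hS x hx).exists_eq_smul_vtx clockGraph_not_isCycleListAt
    exact (TwoSidedIdeal.mem_ker _).2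
      (clockScalarFamily_lift_smul_vtx_eq_zero K ((TwoSidedIdeal.mem_ker _).1 (hS_matrix hx)))
  have hgen_scalar := (TwoSidedIdeal.span_singleton_le_ker_iff _ _).1 <|
    hspan ▸ TwoSidedIdeal.span_le.2 hS_scalar
  exact one_ne_zero ((clockScalarFamily_lift_generator K).symm.trans hgen_scalar)
end

section
/- Let E be an arbitrary directed graph and S ⊆ E⁰. If v lies in the hereditary saturated closure of S and there is a nontrivial cycle based at v, then there exists u ∈ S with u ≥ v. -/
variable {V Ed : Type}

variable (K : Type) [Field K]

variable (G : DirGraph V Ed)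

/- If no vertex of `S` reaches `v`, then the set of vertices not reaching `v` contains
`S` and is hereditary. It is also saturated: a vertex reaching `v` along a path (for `v` itself,
along the cycle) has an edge whose range still reaches `v`. So it contains the closure, hence `v`,
which is absurd. -/

namespace IsPathFromTo

variable {G : DirGraph V Ed}

lemma append {l₁ l₂ : List Ed} {u w v : V} (h₁ : IsPathFromTo G l₁ u w)
    (h₂ : IsPathFromTo G l₂ w v) : IsPathFromTo G (l₁ ++ l₂) u v := by
  refine ⟨by simp [h₁.ne], ?_, ?_, ?_⟩
  · refine List.IsChain.append h₁.chain h₂.chain fun x hx y hy => ?_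
    rw [List.getLast?_eq_some_getLast h₁.ne, Option.mem_some_iff] at hx
    rw [List.head?_eq_some_head h₂.ne, Option.mem_some_iff] at hy
    rw [← hx, ← hy, h₁.rng_eq, h₂.src_eq]
  · rw [List.head_append_of_ne_nil h₁.ne, h₁.src_eq]
  · rw [List.getLast_append_right h₂.ne, h₂.rng_eq]

lemma reaches_rng_head {e : Ed} {l : List Ed} {u v : V} (h : IsPathFromTo G (e :: l) u v) :
    Reaches G (G.rng e) v := by
  rcases l with _ | ⟨f, l⟩
  · exact Or.inl h.rng_eq
  · obtain ⟨hef, hchain⟩ := List.isChain_cons_cons.mp h.chain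
    exact Or.inr ⟨f :: l, List.cons_ne_nil f l, hchain, hef.symm, by simpa using h.rng_eq⟩

lemma exists_src_eq_reaches_rng {l : List Ed} {u v : V} (h : IsPathFromTo G l u v) :
    ∃ e, G.src e = u ∧ Reaches G (G.rng e) v := by
  obtain ⟨e, l, rfl⟩ := List.exists_cons_of_ne_nil h.ne
  exact ⟨e, h.src_eq, h.reaches_rng_head⟩

end IsPathFromTo

lemma Reaches.trans {G : DirGraph V Ed} {u w v : V} (h₁ : Reaches G u w) (h₂ : Reaches G w v) :
    Reaches G u v := by
  rcases h₁ with rfl | ⟨l₁, h₁⟩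
  · exact h₂
  rcases h₂ with rfl | ⟨l₂, h₂⟩
  · exact Or.inr ⟨l₁, h₁⟩
  · exact Or.inr ⟨l₁ ++ l₂, h₁.append h₂⟩

lemma hereditary_setOf_not_reaches (G : DirGraph V Ed) (v : V) :
    Hereditary G {w | ¬Reaches G w v} :=
  fun _ hu _ huw hwv => hu (huw.trans hwv)

lemma saturated_setOf_not_reaches {G : DirGraph V Ed} {v : V}
    (hv : ∃ l, IsClosedPathAt G l v) : Saturated G {w | ¬Reaches G w v} := by
  intro w _ _ hrng hwv
  obtain ⟨l, hl⟩ : ∃ l, IsPathFromTo G l w v := by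
    rcases hwv with rfl | hpath
    exacts [hv, hpath]
  obtain ⟨e, he, hev⟩ := hl.exists_src_eq_reaches_rng
  exact hrng e he hev

/-- if `v` lies in the hereditary saturated closure of `S` and there is a nontrivial
cycle based at `v`, then some `u ∈ S` satisfies `u ≥ v`. -/
theorem exists_mem_reaches_of_mem_closure (G : DirGraph V Ed) (S : Set V) (v : V)
    (hv : v ∈ HSClosure G S) (hcyc : ∃ l : List Ed, IsCycleListAt G l v) :
    ∃ u ∈ S, Reaches G u v := by
  by_contra! hS
  have hclosed : ∃ l, IsClosedPathAt G l v := hcyc.imp fun _ hl => hl.1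
  have hvH : v ∈ {w | ¬Reaches G w v} :=
    hv _ ⟨hS, hereditary_setOf_not_reaches G v, saturated_setOf_not_reaches hclosed⟩
  exact hvH (Or.inl rfl)
end
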